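/- Let R be a strongly φ-ring (a φ-ring in which the set of zero-divisors equals Nil(R)). If R is an IF ring (every injective R-module is flat), then R is a φ-IF ring. -/

import Mathlib

open CategoryTheory

universe u

/-- A commutative ring is a `φ`-ring if its nilradical is a divided prime ideal. -/
def IsPhiRing (R : Type u) [CommRing R] : Prop :=
  (nilradical R).IsPrime ∧ ∀ x : R, x ∉ nilradical R → nilradical R ≤ Ideal.span {x}

/-- A ring is nonnil-coherent if every finitely generated nonnil ideal is
finitely presented as a module. -/
def IsNonnilCoherent (R : Type u) [CommRing R] : Prop :=
  ∀ I : Ideal R, I.FG → ¬ I ≤ nilradical R → Module.FinitePresentation R I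

/-- A module is φ-torsion if every element is annihilated by a nonnil ideal. -/
def IsPhiTorsion (R : Type u) [CommRing R] (T : Type u) [AddCommGroup T] [Module R T] : Prop :=
  ∀ t : T, ∃ I : Ideal R, ¬ I ≤ nilradical R ∧ ∀ a ∈ I, a • t = 0

/-- A module `M` is φ-flat if `Tor₁ᴿ(T, M) = 0` for every φ-torsion module `T`. -/
def IsPhiFlat (R : Type u) [CommRing R] (M : Type u) [AddCommGroup M] [Module R M] : Prop :=
  ∀ (T : Type u) [AddCommGroup T] [Module R T], IsPhiTorsion R T →
    Subsingleton (((Tor (ModuleCat.{u} R) 1).obj (ModuleCat.of R T)).obj (ModuleCat.of R M))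

/-- A module `M` is nonnil-injective if `Ext¹ᴿ(T, M) = 0` for every φ-torsion module `T`. -/
def IsNonnilInjective (R : Type u) [CommRing R] (M : Type u) [AddCommGroup M] [Module R M] :
    Prop :=
  ∀ (T : Type u) [AddCommGroup T] [Module R T], IsPhiTorsion R T →
    Subsingleton (((Ext R (ModuleCat.{u} R) 1).obj (Opposite.op (ModuleCat.of R T))).obj
      (ModuleCat.of R M))

/-- A module `M` is nonnil-FP-injective if `Ext¹ᴿ(T, M) = 0` for every finitely
presented φ-torsion module `T`. -/
def IsNonnilFPInjective (R : Type u) [CommRing R] (M : Type u) [AddCommGroup M] [Module R M] :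
    Prop :=
  ∀ (T : Type u) [AddCommGroup T] [Module R T], Module.FinitePresentation R T →
    IsPhiTorsion R T →
    Subsingleton (((Ext R (ModuleCat.{u} R) 1).obj (Opposite.op (ModuleCat.of R T))).obj
      (ModuleCat.of R M))

/-!
In an IF ring every non-zero-divisor `x` is a unit: embed `R ⧸ (x)` into an injective, hence flat,
module `E`; `x` acts injectively on `E` and kills the image of `1`, so `1 ∈ (x)`. In a strongly
φ-ring every non-nilpotent element is a non-zero-divisor, so every nonnil ideal is the unit ideal
and every φ-torsion module is zero. Hence `Tor₁(T, M) = 0` for every φ-torsion `T` and every `M`.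
-/

open MonoidalCategory Limits

lemma isZero_tensorObj_of_isZero_left {C : Type*} [Category C] [MonoidalCategory C]
    [Preadditive C] [MonoidalPreadditive C] {X : C} (hX : IsZero X) (Y : C) : IsZero (X ⊗ Y) := by
  rw [IsZero.iff_id_eq_zero] at hX ⊢
  rw [← id_whiskerRight, hX, MonoidalPreadditive.zero_whiskerRight]

lemma isZero_Tor_obj_obj_of_isZero {C : Type*} [Category C] [MonoidalCategory C] [Abelian C]
    [MonoidalPreadditive C] [HasProjectiveResolutions C] {X : C} (hX : IsZero X) (Y : C) (n : ℕ) :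
    IsZero (((Tor C n).obj X).obj Y) := by
  let P : ProjectiveResolution Y := (HasProjectiveResolution.out (Z := Y)).some
  refine IsZero.of_iso ?_ (P.isoLeftDerivedObj ((tensoringLeft C).obj X) n)
  exact ShortComplex.isZero_homology_of_isZero_X₂ _ (isZero_tensorObj_of_isZero_left hX _)

lemma isUnit_of_mem_nonZeroDivisors_of_injective_flat {R : Type u} [CommRing R]
    (hIF : ∀ (M : Type u) [AddCommGroup M] [Module R M], Module.Injective R M → Module.Flat R M)
    {x : R} (hx : x ∈ nonZeroDivisors R) : IsUnit x := by
  let N := ModuleCat.of R (R ⧸ Ideal.span {x})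
  let E : ModuleCat R := Injective.under N
  let ι := Injective.ι N
  have hι : Function.Injective ι := (ModuleCat.mono_iff_injective ι).mp inferInstance
  have : Module.Flat R E := hIF E <|
    Module.injective_module_of_injective_object R E (inj := inferInstanceAs (Injective E))
  have hreg : IsSMulRegular E x := Module.Flat.isSMulRegular_of_nonZeroDivisors hx
  have hkill : x • (Ideal.Quotient.mk (Ideal.span {x}) 1 : N) = 0 := by
    simp [Algebra.smul_def]
  have hone : (Ideal.Quotient.mk (Ideal.span {x}) 1 : N) = 0 := by
    refine hι (hreg ?_)
    simp only [← map_smul, hkill, map_zero, smul_zero]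
  rw [Ideal.Quotient.eq_zero_iff_mem, Ideal.mem_span_singleton] at hone
  exact isUnit_of_dvd_one hone

lemma IsPhiTorsion.subsingleton {R : Type u} [CommRing R]
    (hunit : ∀ x : R, x ∉ nilradical R → IsUnit x) {T : Type u} [AddCommGroup T] [Module R T]
    (hT : IsPhiTorsion R T) : Subsingleton T := by
  refine subsingleton_of_forall_eq 0 fun t => ?_
  obtain ⟨I, hI, hann⟩ := hT t
  obtain ⟨a, haI, ha⟩ := SetLike.not_le_iff_exists.mp hI
  exact (hunit a ha).smul_eq_zero.mp (hann a haI)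

theorem phiIF_of_IF_of_stronglyPhiRing_general (R : Type u) [CommRing R]
    (hZN : ∀ r : R, (∃ s : R, s ≠ 0 ∧ r * s = 0) ↔ r ∈ nilradical R)
    (hIF : ∀ (M : Type u) [AddCommGroup M] [Module R M],
      Module.Injective R M → Module.Flat R M) :
    ∀ (M : Type u) [AddCommGroup M] [Module R M],
      IsNonnilInjective R M → IsPhiFlat R M := by
  intro M _ _ _ T _ _ hT
  have hunit : ∀ x : R, x ∉ nilradical R → IsUnit x := fun x hx =>
    isUnit_of_mem_nonZeroDivisors_of_injective_flat hIF <| mem_nonZeroDivisors_iff_left.mpr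
      fun s hs => by_contra fun hs0 => hx ((hZN x).mp ⟨s, hs0, hs⟩)
  have := hT.subsingleton hunit
  exact ModuleCat.subsingleton_of_isZero <|
    isZero_Tor_obj_obj_of_isZero (ModuleCat.isZero_of_subsingleton _) _ _

/-- Let `R` be a strongly φ-ring (a φ-ring whose zero-divisors are
exactly the nilpotent elements). If `R` is an IF ring (every injective module is flat),
then `R` is a φ-IF ring. -/
theorem phiIF_of_IF_of_stronglyPhiRing (R : Type u) [CommRing R] (hR : IsPhiRing R)
    (hZN : ∀ r : R, (∃ s : R, s ≠ 0 ∧ r * s = 0) ↔ r ∈ nilradical R)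
    (hIF : ∀ (M : Type u) [AddCommGroup M] [Module R M],
      Module.Injective R M → Module.Flat R M) :
    ∀ (M : Type u) [AddCommGroup M] [Module R M],
      IsNonnilInjective R M → IsPhiFlat R M :=
  phiIF_of_IF_of_stronglyPhiRing_general R hZN hIF
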